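/- Let A = {0,1,2} and f : A³ → A defined by f(x,y,z) = 2 if x=2 or y=2 or z=2, and f(x,y,z) = z otherwise. Define the ν-CA H on A^ℤ by H(x)_0 = 2 and H(x)_i = f(x_{i-1},x_i,x_{i+1}) for i ≠ 0. Then H is equicontinuous: for all n ∈ ℕ and x, y with x_{[-2n,2n]} = y_{[-2n,2n]} one has H^k(x)_{[-n,n]} = H^k(y)_{[-n,n]} for all k ∈ ℕ (indeed H^k(x)_{[-n,n]} = 2^{2n+1} for k > n). -/
import Mathlib


/-- The local rule `f(x,y,z) = 2` if `x=2 ∨ y=2 ∨ z=2`, else `z`. -/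
def fRule19 (x y z : Fin 3) : Fin 3 :=
  if x = 2 ∨ y = 2 ∨ z = 2 then 2 else z

/-- The ν-CA `H` on `{0,1,2}^ℤ` with `H(x)_0 = 2` and `H(x)_i = f(x_{i-1},x_i,x_{i+1})`
for `i ≠ 0` is equicontinuous: if `x` and `y` agree on `[-2n,2n]` then `H^k(x)` and
`H^k(y)` agree on `[-n,n]` for all `k`; indeed `H^k(x)_{[-n,n]} = 2^{2n+1}` for `k > n`. -/
theorem stmt_19
    (H : (ℤ → Fin 3) → (ℤ → Fin 3))
    (hH : ∀ (x : ℤ → Fin 3) (i : ℤ),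
      H x i = if i = 0 then 2 else fRule19 (x (i - 1)) (x i) (x (i + 1))) :
    (∀ (n : ℕ) (x y : ℤ → Fin 3),
      (∀ i : ℤ, |i| ≤ (2 * n : ℕ) → x i = y i) →
      ∀ (k : ℕ) (i : ℤ), |i| ≤ (n : ℤ) → H^[k] x i = H^[k] y i) ∧
    (∀ (n : ℕ) (x : ℤ → Fin 3) (k : ℕ), n < k →
      ∀ i : ℤ, |i| ≤ (n : ℤ) → H^[k] x i = 2) := by
  -- Key lemma: cells within distance < k of the origin are 2 after k steps.
  have key2 : ∀ (k : ℕ) (x : ℤ → Fin 3) (i : ℤ), |i| < (k : ℤ) → H^[k] x i = 2 := by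
    intro k
    induction k with
    | zero => intro x i hi; rw [abs_lt] at hi; omega
    | succ k ih =>
      intro x i hi
      rw [Function.iterate_succ_apply', hH]
      by_cases h0 : i = 0
      · simp [h0]
      · rw [if_neg h0]
        unfold fRule19
        rcases lt_or_gt_of_ne h0 with hlt | hgt
        · have : H^[k] x (i + 1) = 2 := ih x (i + 1) (by rw [abs_lt] at hi ⊢; omega)
          rw [if_pos (Or.inr (Or.inr this))]
        · have : H^[k] x (i - 1) = 2 := ih x (i - 1) (by rw [abs_lt] at hi ⊢; omega)
          rw [if_pos (Or.inl this)]
  -- Propagation lemma.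
  have prop : ∀ (k : ℕ) (m : ℤ) (x y : ℤ → Fin 3),
      (∀ i : ℤ, |i| ≤ m + k → x i = y i) →
      ∀ i : ℤ, |i| ≤ m → H^[k] x i = H^[k] y i := by
    intro k
    induction k with
    | zero => intro m x y h i hi; exact h i (by omega)
    | succ k ih =>
      intro m x y h i hi
      rw [Function.iterate_succ_apply, Function.iterate_succ_apply]
      refine ih m (H x) (H y) ?_ i hi
      intro j hj
      rw [hH, hH]
      by_cases h0 : j = 0
      · simp [h0]
      · rw [if_neg h0, if_neg h0, h (j - 1) (by rw [abs_le] at hj ⊢; omega),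
          h j (by rw [abs_le] at hj ⊢; omega), h (j + 1) (by rw [abs_le] at hj ⊢; omega)]
  constructor
  · intro n x y hxy k i hi
    by_cases hk : k ≤ n
    · refine prop k n x y ?_ i hi
      intro j hj
      exact hxy j (by rw [abs_le] at hj ⊢; push_cast; omega)
    · rw [key2 k x i (by rw [abs_le] at hi; rw [abs_lt]; omega), key2 k y i (by rw [abs_le] at hi; rw [abs_lt]; omega)]
  · intro n x k hk i hi
    exact key2 k x i (by rw [abs_le] at hi; rw [abs_lt]; omega)
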